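/- arXiv:2210.11191 — 2 statements merged into one kernel-verified Lean document; each statement's English description precedes it below -/
import Mathlib

section
/- A simplicial map p : Y → X is culf if and only if for every 1-simplex f ∈ Y_1 the induced map of intervals I(f) → I(p f) is a levelwise equivalence. -/
open CategoryTheory SimplexCategory Opposite

namespace Paper

/-- A monotone map in `Δ` is last-point-preserving. -/
def LastPreserving {a b : SimplexCategory} (f : a ⟶ b) : Prop :=
  f.toOrderHom (Fin.last a.len) = Fin.last b.len

/-- A monotone map in `Δ` is active (endpoint-preserving). -/
def Active {a b : SimplexCategory} (f : a ⟶ b) : Prop :=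
  f.toOrderHom 0 = 0 ∧ LastPreserving f

universe u

variable {X Y : SimplexCategoryᵒᵖ ⥤ Type u}

/-- A simplicial map `p : Y ⟶ X` is cartesian on a map `f` of `Δ` if the
corresponding naturality square is a pullback. -/
def IsCartesianOn (p : Y ⟶ X) {a b : SimplexCategory} (f : a ⟶ b) : Prop :=
  IsPullback (Y.map f.op) (p.app (op b)) (p.app (op a)) (X.map f.op)

/-- A simplicial map is a right fibration if it is cartesian on every
last-point-preserving map of `Δ`. -/
def IsRightFib (p : Y ⟶ X) : Prop :=
  ∀ {a b : SimplexCategory} (f : a ⟶ b), LastPreserving f → IsCartesianOn p f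

/-- A simplicial map is culf if it is cartesian on every active map of `Δ`. -/
def IsCulf (p : Y ⟶ X) : Prop :=
  ∀ {a b : SimplexCategory} (f : a ⟶ b), Active f → IsCartesianOn p f

/-- The induced map on fibers: for a simplicial map `p : Y ⟶ X`, a map
`f : a ⟶ b` of `Δ` and `y ∈ Y_a`, the map from the fiber of
`Y.map f : Y_b → Y_a` over `y` to the fiber of `X.map f : X_b → X_a` over
`p y`. -/
def fiberMap (p : Y ⟶ X) {a b : SimplexCategory} (f : a ⟶ b) (y : Y.obj (op a)) :
    {s : Y.obj (op b) // Y.map f.op s = y} →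
      {s : X.obj (op b) // X.map f.op s = p.app (op a) y} :=
  fun s => ⟨p.app (op b) s.1, by
    rw [← FunctorToTypes.naturality p f.op s.1, s.2]⟩

open CategoryTheory.Limits

lemma map_map (Z : SimplexCategoryᵒᵖ ⥤ Type u) {a b c : SimplexCategory} (f : a ⟶ b) (g : b ⟶ c)
    (s : Z.obj (op c)) : Z.map f.op (Z.map g.op s) = Z.map (f ≫ g).op s := by
  rw [op_comp, FunctorToTypes.map_comp_apply]

lemma isCartesianOn_iff (p : Y ⟶ X) {a b : SimplexCategory} (f : a ⟶ b) :
    IsCartesianOn p f ↔ ∀ y, Function.Bijective (fiberMap p f y) := by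
  let c : PullbackCone (p.app (op a)) (X.map f.op) :=
    PullbackCone.mk (Y.map f.op) (p.app (op b)) (p.naturality f.op)
  have hc : IsCartesianOn p f ↔ Function.Bijective c.toPullbackObj := by
    constructor
    · intro h
      exact c.isLimitEquivBijective h.isLimit
    · intro h
      have := IsPullback.of_isLimit (c.isLimitEquivBijective.symm h)
      exact this
  rw [hc]
  constructor
  · rintro ⟨inj, surj⟩ y
    constructor
    · rintro ⟨s₁, h₁⟩ ⟨s₂, h₂⟩ h
      have hp : p.app (op b) s₁ = p.app (op b) s₂ := congrArg Subtype.val h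
      have : c.toPullbackObj s₁ = c.toPullbackObj s₂ := by
        apply Subtype.ext
        apply Prod.ext
        · exact h₁.trans h₂.symm
        · exact hp
      exact Subtype.ext (inj this)
    · rintro ⟨x, hx⟩
      obtain ⟨s, hs⟩ := surj ⟨⟨y, x⟩, hx.symm⟩
      have h1 : Y.map f.op s = y := congrArg (fun t => t.1.1) hs
      have h2 : p.app (op b) s = x := congrArg (fun t => t.1.2) hs
      exact ⟨⟨s, h1⟩, Subtype.ext h2⟩
  · intro h
    constructor
    · intro s₁ s₂ hs
      have e1 : Y.map f.op s₁ = Y.map f.op s₂ := congrArg (fun t => t.1.1) hs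
      have e2 : p.app (op b) s₁ = p.app (op b) s₂ := congrArg (fun t => t.1.2) hs
      have := (h (Y.map f.op s₁)).1 (a₁ := ⟨s₁, rfl⟩) (a₂ := ⟨s₂, e1.symm⟩) (Subtype.ext e2)
      exact congrArg Subtype.val this
    · rintro ⟨⟨y, x⟩, hyx⟩
      obtain ⟨⟨s, hs⟩, he⟩ := (h y).2 ⟨x, hyx.symm⟩
      refine ⟨s, Subtype.ext (Prod.ext hs (congrArg Subtype.val he))⟩

lemma fwb_id (p : Y ⟶ X) (a : SimplexCategory) (y : Y.obj (op a)) :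
    Function.Bijective (fiberMap p (𝟙 a) y) := by
  constructor
  · rintro ⟨s₁, h₁⟩ ⟨s₂, h₂⟩ _
    apply Subtype.ext
    have := h₁.trans h₂.symm
    simpa using this
  · rintro ⟨x, hx⟩
    have hx' : x = p.app (op a) y := by simpa using hx
    exact ⟨⟨y, by simp⟩, Subtype.ext hx'.symm⟩

lemma fwb_cancel (p : Y ⟶ X) {a b c : SimplexCategory} (f : a ⟶ b) (g : b ⟶ c)
    (hf : ∀ y, Function.Injective (fiberMap p f y))
    (hfg : ∀ y, Function.Bijective (fiberMap p (f ≫ g) y)) (y : Y.obj (op b)) :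
    Function.Bijective (fiberMap p g y) := by
  constructor
  · rintro ⟨s₁, h₁⟩ ⟨s₂, h₂⟩ h
    have hp : p.app (op c) s₁ = p.app (op c) s₂ := congrArg Subtype.val h
    have e := (hfg (Y.map f.op y)).1 (a₁ := ⟨s₁, by rw [← map_map, h₁]⟩)
      (a₂ := ⟨s₂, by rw [← map_map, h₂]⟩) (Subtype.ext hp)
    have e' : s₁ = s₂ := congrArg Subtype.val e
    exact Subtype.ext e'
  · rintro ⟨x, hx⟩
    have hx' : X.map (f ≫ g).op x = p.app (op a) (Y.map f.op y) := by
      rw [← map_map X f g x, hx, FunctorToTypes.naturality]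
    obtain ⟨⟨t, ht⟩, he⟩ := (hfg (Y.map f.op y)).2 ⟨x, hx'⟩
    have hpt : p.app (op c) t = x := congrArg Subtype.val he
    have h1 : Y.map f.op (Y.map g.op t) = Y.map f.op y := by rw [map_map]; exact ht
    have h2 : p.app (op b) (Y.map g.op t) = p.app (op b) y := by
      rw [FunctorToTypes.naturality, hpt, hx]
    have := hf (Y.map f.op y) (a₁ := ⟨Y.map g.op t, h1⟩) (a₂ := ⟨y, rfl⟩) (Subtype.ext h2)
    exact ⟨⟨t, congrArg Subtype.val this⟩, Subtype.ext hpt⟩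

def can (n : ℕ) : (SimplexCategory.mk 1) ⟶ SimplexCategory.mk n :=
  SimplexCategory.mkOfLe 0 (Fin.last n) (Fin.zero_le _)

lemma active_can (n : ℕ) : Active (can n) := ⟨rfl, rfl⟩

lemma active_id (a : SimplexCategory) : Active (𝟙 a) := ⟨rfl, rfl⟩

lemma active_comp {a b c : SimplexCategory} {f : a ⟶ b} {g : b ⟶ c}
    (hf : Active f) (hg : Active g) : Active (f ≫ g) := by
  have hf2 : f.toOrderHom (Fin.last a.len) = Fin.last b.len := hf.2
  have hg2 : g.toOrderHom (Fin.last b.len) = Fin.last c.len := hg.2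
  constructor
  · show g.toOrderHom (f.toOrderHom 0) = 0
    rw [hf.1, hg.1]
  · show g.toOrderHom (f.toOrderHom (Fin.last a.len)) = Fin.last c.len
    rw [hf2, hg2]

lemma active_one_eq {n : ℕ} (f : (SimplexCategory.mk 1) ⟶ SimplexCategory.mk n)
    (hf : Active f) : f = can n := by
  have hf2 : f.toOrderHom (Fin.last 1) = Fin.last n := hf.2
  apply Hom.ext_one_left
  · rw [hf.1]; rfl
  · rw [show (1 : Fin 2) = Fin.last 1 from rfl, hf2]; rfl

lemma eq_to_zero {n : SimplexCategory} (f g : n ⟶ SimplexCategory.mk 0) : f = g :=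
  (eq_const_to_zero f).trans (eq_const_to_zero g).symm


lemma fwb_can_zero (p : Y ⟶ X)
    (H : ∀ y, Function.Bijective (fiberMap p (can 2) y))
    (y : Y.obj (op (SimplexCategory.mk 1))) :
    Function.Bijective (fiberMap p (can 0) y) := by
  set v0 : SimplexCategory.mk 0 ⟶ SimplexCategory.mk 1 := SimplexCategory.const _ _ 0 with hv0
  set v2 : SimplexCategory.mk 0 ⟶ SimplexCategory.mk 2 := SimplexCategory.const _ _ 0 with hv2
  set u : SimplexCategory.mk 2 ⟶ SimplexCategory.mk 0 := SimplexCategory.const _ _ 0 with hu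
  have c0 : can 2 ≫ σ 0 = 𝟙 (SimplexCategory.mk 1) :=
    Hom.ext_one_left _ _ (by decide) (by decide)
  have c1 : can 2 ≫ σ 1 = 𝟙 (SimplexCategory.mk 1) :=
    Hom.ext_one_left _ _ (by decide) (by decide)
  have d21 : δ 2 ≫ σ 1 = 𝟙 (SimplexCategory.mk 1) :=
    Hom.ext_one_left _ _ (by decide) (by decide)
  have d20 : δ 2 ≫ σ 0 = can 0 ≫ v0 :=
    Hom.ext_one_left _ _ (by decide) (by decide)
  constructor
  · rintro ⟨s₁, h₁⟩ ⟨s₂, h₂⟩ h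
    have hp : p.app _ s₁ = p.app _ s₂ := congrArg Subtype.val h
    have key : can 2 ≫ u = can 0 := eq_to_zero _ _
    have hT : ∀ s, Y.map (can 0).op s = y → Y.map (can 2).op (Y.map u.op s) = y := by
      intro s hs
      rw [map_map, key, hs]
    have e := (H y).1 (a₁ := ⟨Y.map u.op s₁, hT s₁ h₁⟩) (a₂ := ⟨Y.map u.op s₂, hT s₂ h₂⟩)
      (Subtype.ext (by
        show p.app _ (Y.map u.op s₁) = p.app _ (Y.map u.op s₂)
        rw [FunctorToTypes.naturality, FunctorToTypes.naturality, hp]))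
    have eT : Y.map u.op s₁ = Y.map u.op s₂ := congrArg Subtype.val e
    have hvu : v2 ≫ u = 𝟙 (SimplexCategory.mk 0) := eq_to_zero _ _
    apply Subtype.ext
    calc s₁ = Y.map (v2 ≫ u).op s₁ := by rw [hvu]; simp
      _ = Y.map v2.op (Y.map u.op s₁) := (map_map Y v2 u s₁).symm
      _ = Y.map v2.op (Y.map u.op s₂) := by rw [eT]
      _ = Y.map (v2 ≫ u).op s₂ := map_map Y v2 u s₂
      _ = s₂ := by rw [hvu]; simp
  · rintro ⟨x, hx⟩
    have S_eq : Y.map (σ 0).op y = Y.map (σ 1).op y := by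
      have h0 : Y.map (can 2).op (Y.map (σ 0).op y) = y := by rw [map_map, c0]; simp
      have h1 : Y.map (can 2).op (Y.map (σ 1).op y) = y := by rw [map_map, c1]; simp
      have e := (H y).1 (a₁ := ⟨Y.map (σ 0).op y, h0⟩) (a₂ := ⟨Y.map (σ 1).op y, h1⟩)
        (Subtype.ext (by
          show p.app _ (Y.map (σ 0).op y) = p.app _ (Y.map (σ 1).op y)
          rw [FunctorToTypes.naturality, FunctorToTypes.naturality, ← hx, map_map, map_map,
            eq_to_zero (σ 0 ≫ can 0) (σ 1 ≫ can 0)]))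
      exact congrArg Subtype.val e
    refine ⟨⟨Y.map v0.op y, ?_⟩, Subtype.ext ?_⟩
    · calc Y.map (can 0).op (Y.map v0.op y) = Y.map (can 0 ≫ v0).op y := map_map Y _ _ y
        _ = Y.map (δ 2 ≫ σ 0).op y := by rw [d20]
        _ = Y.map (δ 2).op (Y.map (σ 0).op y) := (map_map Y _ _ y).symm
        _ = Y.map (δ 2).op (Y.map (σ 1).op y) := by rw [S_eq]
        _ = Y.map (δ 2 ≫ σ 1).op y := map_map Y _ _ y
        _ = y := by rw [d21]; simp
    · show p.app _ (Y.map v0.op y) = x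
      have hv0c : v0 ≫ can 0 = 𝟙 (SimplexCategory.mk 0) := eq_to_zero _ _
      rw [FunctorToTypes.naturality, ← hx, map_map, hv0c]
      simp

lemma fwb_can (p : Y ⟶ X)
    (H : ∀ (g : Y.obj (op (SimplexCategory.mk 1))) (m : ℕ),
      Function.Bijective (fiberMap p (can (m + 2)) g))
    (n : ℕ) (y : Y.obj (op (SimplexCategory.mk 1))) :
    Function.Bijective (fiberMap p (can n) y) := by
  match n with
  | 0 => exact fwb_can_zero p (fun g => H g 0) y
  | 1 =>
    have h1 : 𝟙 (SimplexCategory.mk 1) = can 1 := active_one_eq _ (active_id _)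
    rw [← h1]
    exact fwb_id p _ y
  | (m + 2) => exact H y m

/-- A simplicial map `p : Y ⟶ X` is culf if and only if for every
`1`-simplex `g ∈ Y_1` the induced map on intervals `I(g) → I(p g)` is a
levelwise equivalence.  Here `I(g)_m` is the fiber of the long-edge map
`Y_{m+2} → Y_1` over `g`. -/
theorem isCulf_iff_intervals (p : Y ⟶ X) :
    IsCulf p ↔ ∀ (g : Y.obj (op (SimplexCategory.mk 1))) (m : ℕ),
      Function.Bijective (fiberMap p
        (SimplexCategory.mkOfLe (0 : Fin (m + 3)) (Fin.last (m + 2)) (Fin.zero_le _)) g) := by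
  constructor
  · intro hc g m
    exact (isCartesianOn_iff p (can (m + 2))).1 (hc _ (active_can _)) g
  · intro H a b f hf
    rw [isCartesianOn_iff]
    intro y
    have Hc : ∀ (k : ℕ) (y : Y.obj (op (SimplexCategory.mk 1))),
        Function.Bijective (fiberMap p (can k) y) := fwb_can p (fun g m => H g m)
    have hj : Active ((can a.len : SimplexCategory.mk 1 ⟶ a) ≫ f) :=
      active_comp (active_can _) hf
    have key : (can a.len : SimplexCategory.mk 1 ⟶ a) ≫ f = can b.len :=
      active_one_eq (n := b.len) _ hj
    refine fwb_cancel p (can a.len : SimplexCategory.mk 1 ⟶ a) f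
      (fun y' => (Hc a.len y').1) (fun y' => ?_) y
    rw [key]
    exact Hc b.len y'

end Paper
end

section
/- A simplicial map f : Y → X of simplicial spaces is culf if and only if its edgewise subdivision Sd(f) : Sd(Y) → Sd(X) is a right fibration. -/
open CategoryTheory SimplexCategory Opposite

section TypesPullback

open CategoryTheory Limits

universe v

/-- Element-wise criterion for a commutative square in `Type` to be a pullback. -/
theorem types_isPullback_iff {P A B C : Type v} (fst : P ⟶ A) (snd : P ⟶ B)
    (f : A ⟶ C) (g : B ⟶ C) :
    IsPullback fst snd f g ↔
      ((∀ z, f (fst z) = g (snd z)) ∧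
        ∀ a b, f a = g b → ∃! z, fst z = a ∧ snd z = b) := by
  constructor
  · intro hP
    refine ⟨fun z => ConcreteCategory.congr_hom hP.w z, fun a b h => ?_⟩
    let L := hP.isLimit
    refine ⟨PullbackCone.IsLimit.lift L (TypeCat.ofHom fun _ : PUnit.{v+1} => a) (TypeCat.ofHom fun _ => b)
      (by ext; exact h) PUnit.unit, ⟨?_, ?_⟩, ?_⟩
    · exact ConcreteCategory.congr_hom (PullbackCone.IsLimit.lift_fst L (TypeCat.ofHom fun _ : PUnit.{v+1} => a) (TypeCat.ofHom fun _ => b)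
        (by ext; exact h)) PUnit.unit
    · exact ConcreteCategory.congr_hom (PullbackCone.IsLimit.lift_snd L (TypeCat.ofHom fun _ : PUnit.{v+1} => a) (TypeCat.ofHom fun _ => b)
        (by ext; exact h)) PUnit.unit
    · rintro q ⟨hq1, hq2⟩
      have := PullbackCone.IsLimit.hom_ext L
        (k := TypeCat.ofHom fun _ : PUnit.{v+1} => q)
        (l := PullbackCone.IsLimit.lift L (TypeCat.ofHom fun _ : PUnit.{v+1} => a) (TypeCat.ofHom fun _ => b)
          (by ext; exact h))
        (by ext t
            exact hq1.trans (ConcreteCategory.congr_hom (PullbackCone.IsLimit.lift_fst L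
              (TypeCat.ofHom fun _ : PUnit.{v+1} => a) (TypeCat.ofHom fun _ => b)
              (by ext; exact h)) t).symm)
        (by ext t
            exact hq2.trans (ConcreteCategory.congr_hom (PullbackCone.IsLimit.lift_snd L
              (TypeCat.ofHom fun _ : PUnit.{v+1} => a) (TypeCat.ofHom fun _ => b)
              (by ext; exact h)) t).symm)
      exact ConcreteCategory.congr_hom this PUnit.unit
  · rintro ⟨hcomm, h⟩
    apply IsPullback.of_isLimit (c := PullbackCone.mk fst snd (by ext z; exact hcomm z))
    refine PullbackCone.IsLimit.mk _
      (fun s => TypeCat.ofHom fun t => (h (s.fst t) (s.snd t) (ConcreteCategory.congr_hom s.condition t)).choose)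
      (fun s => by ext t; exact
        (h (s.fst t) (s.snd t) (ConcreteCategory.congr_hom s.condition t)).choose_spec.1.1)
      (fun s => by ext t; exact
        (h (s.fst t) (s.snd t) (ConcreteCategory.congr_hom s.condition t)).choose_spec.1.2)
      ?_
    intro s m hm1 hm2; ext t; exact
        (h (s.fst t) (s.snd t) (ConcreteCategory.congr_hom s.condition t)).choose_spec.2 (m t)
          ⟨ConcreteCategory.congr_hom hm1 t, ConcreteCategory.congr_hom hm2 t⟩

end TypesPullback

namespace Paper

/-- The action on morphisms of the edgewise subdivision functor
`Q : Δ → Δ`, `[n] ↦ [n]ᵒᵖ ⋆ [n] = [2n+1]`: it acts as `fᵒᵖ` on the first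
block (the primed elements `n', …, 0'`) and as `f` on the second block. -/
def Qmap {a b : SimplexCategory} (f : a ⟶ b) :
    SimplexCategory.mk (2 * a.len + 1) ⟶ SimplexCategory.mk (2 * b.len + 1) :=
  SimplexCategory.mkHom
  { toFun := fun i =>
      if h : (i : ℕ) ≤ a.len then
        -- element `(a.len - i)'` goes to `(f (a.len - i))'`
        ⟨b.len - (f.toOrderHom ⟨a.len - (i : ℕ), by omega⟩ : ℕ), by omega⟩
      else
        -- element `i - (a.len + 1)` of the second block goes to `f` of it
        Fin.mk (b.len + 1 + (f.toOrderHom ⟨(i : ℕ) - (a.len + 1), by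
            have := i.is_lt; omega⟩ : ℕ)) (by
          have := (f.toOrderHom ⟨(i : ℕ) - (a.len + 1), by
            have := i.is_lt; omega⟩).is_lt
          omega)
    monotone' := by
      intro i j hij
      have hij' : (i : ℕ) ≤ (j : ℕ) := hij
      dsimp only
      split_ifs with h1 h2 h2
      · have hm := f.toOrderHom.monotone
          (show (⟨a.len - (j : ℕ), by omega⟩ : Fin (a.len + 1)) ≤
              ⟨a.len - (i : ℕ), by omega⟩ from by
            simp only [Fin.mk_le_mk]; omega)
        simp only [Fin.mk_le_mk] at hm ⊢
        omega
      · simp only [Fin.le_def]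
        omega
      · omega
      · have hm := f.toOrderHom.monotone
          (show (⟨(i : ℕ) - (a.len + 1), by have := i.is_lt; omega⟩ : Fin (a.len + 1)) ≤
              ⟨(j : ℕ) - (a.len + 1), by have := j.is_lt; omega⟩ from by
            simp only [Fin.mk_le_mk]; omega)
        simp only [Fin.mk_le_mk] at hm ⊢
        omega }

universe u

variable {X Y : SimplexCategoryᵒᵖ ⥤ Type u}

lemma Qmap_apply_left {a b : SimplexCategory} (f : a ⟶ b) (i : Fin (2 * a.len + 1 + 1))
    (h : (i : ℕ) ≤ a.len) :
    ((Qmap f).toOrderHom i : ℕ) = b.len - (f.toOrderHom ⟨a.len - (i : ℕ), by omega⟩ : ℕ) := by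
  exact congrArg Fin.val (dif_pos h)

lemma Qmap_apply_right {a b : SimplexCategory} (f : a ⟶ b) (i : Fin (2 * a.len + 1 + 1))
    (h : a.len < (i : ℕ)) :
    ((Qmap f).toOrderHom i : ℕ) =
      b.len + 1 + (f.toOrderHom ⟨(i : ℕ) - (a.len + 1), by have := i.is_lt; omega⟩ : ℕ) := by
  have h' : ¬ (i : ℕ) ≤ a.len := by omega
  exact congrArg Fin.val (dif_neg h')

lemma active_Qmap {a b : SimplexCategory} (f : a ⟶ b) (hf : LastPreserving f) :
    Active (Qmap f) := by
  have hlast : (f.toOrderHom (Fin.last a.len) : ℕ) = b.len := by rw [hf]; rfl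
  constructor
  · apply Fin.ext
    have h0 := Qmap_apply_left f 0 (by simp)
    have harg : (⟨a.len - ((0 : Fin (2*a.len+1+1)) : ℕ), by omega⟩ : Fin (a.len + 1)) =
        Fin.last a.len := by
      apply Fin.ext; simp [Fin.last]
    rw [harg, hlast] at h0
    show ((Qmap f).toOrderHom 0 : ℕ) = 0
    omega
  · apply Fin.ext
    have h0 := Qmap_apply_right f (Fin.last _) (by simp [Fin.last]; omega)
    have harg : (⟨((Fin.last (2*a.len+1) : Fin (2*a.len+1+1)) : ℕ) - (a.len + 1), by
        have := (Fin.last (2*a.len+1)).is_lt; omega⟩ : Fin (a.len + 1)) = Fin.last a.len := by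
      apply Fin.ext; simp [Fin.last]; omega
    rw [harg, hlast] at h0
    show ((Qmap f).toOrderHom (Fin.last (2*a.len+1)) : ℕ) = 2*b.len+1
    omega

/-- Inclusion of the second block `[a] → [2a+1]`, `i ↦ a+1+i`. -/
def secInc (a : SimplexCategory) : a ⟶ SimplexCategory.mk (2 * a.len + 1) :=
  SimplexCategory.Hom.mk
  { toFun := fun i => ⟨a.len + 1 + (i : ℕ), by show a.len + 1 + (i : ℕ) < 2 * a.len + 1 + 1; have := i.is_lt; omega⟩
    monotone' := by
      intro i j h
      simp only [Fin.mk_le_mk]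
      have : (i : ℕ) ≤ (j : ℕ) := h
      omega }

/-- Retraction `[2a+1] → [a]` collapsing the first block to `0`. -/
def retr (a : SimplexCategory) : SimplexCategory.mk (2 * a.len + 1) ⟶ a :=
  SimplexCategory.Hom.mk
  { toFun := fun i =>
      if (i : ℕ) ≤ a.len then 0
      else ⟨(i : ℕ) - (a.len + 1), by have : (i : ℕ) < 2 * a.len + 1 + 1 := i.is_lt; omega⟩
    monotone' := by
      intro i j h
      have h' : (i : ℕ) ≤ (j : ℕ) := h
      dsimp only
      split_ifs with h1 h2 h2
      · exact le_refl _
      · exact Fin.zero_le _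
      · omega
      · simp only [Fin.mk_le_mk]; omega }

lemma secInc_apply (a : SimplexCategory) (i : Fin (a.len + 1)) :
    ((secInc a).toOrderHom i : ℕ) = a.len + 1 + (i : ℕ) := rfl

lemma secInc_comp_Qmap {a b : SimplexCategory} (f : a ⟶ b) :
    secInc a ≫ Qmap f = f ≫ secInc b := by
  apply SimplexCategory.Hom.ext
  apply OrderHom.ext
  funext i
  apply Fin.ext
  simp only [SimplexCategory.comp_toOrderHom, OrderHom.comp_coe, Function.comp_apply]
  have hval : (((secInc a).toOrderHom i : Fin (2 * a.len + 1 + 1)) : ℕ) = a.len + 1 + (i : ℕ) := rfl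
  rw [Qmap_apply_right f _ (by omega)]
  have harg : (⟨(((secInc a).toOrderHom i : Fin (2 * a.len + 1 + 1)) : ℕ) - (a.len + 1), by
      have := ((secInc a).toOrderHom i).is_lt; omega⟩ : Fin (a.len + 1)) = i := by
    apply Fin.ext; simp [hval]
  simp only [harg]
  rw [secInc_apply b (f.toOrderHom i)]

lemma Qmap_comp_retr {a b : SimplexCategory} (f : a ⟶ b) (h0 : f.toOrderHom 0 = 0) :
    Qmap f ≫ retr b = retr a ≫ f := by
  have h0' : (f.toOrderHom 0 : ℕ) = 0 := by rw [h0]; rfl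
  apply SimplexCategory.Hom.ext
  apply OrderHom.ext
  funext i
  apply Fin.ext
  simp only [SimplexCategory.comp_toOrderHom, OrderHom.comp_coe, Function.comp_apply]
  by_cases h : (i : ℕ) ≤ a.len
  · -- both sides are 0
    have hQ := Qmap_apply_left f i h
    have hQle : (((Qmap f).toOrderHom i : Fin (2 * b.len + 1 + 1)) : ℕ) ≤ b.len := by omega
    have hL : (retr b).toOrderHom ((Qmap f).toOrderHom i) = 0 := by
      simp only [retr, SimplexCategory.Hom.toOrderHom_mk, OrderHom.coe_mk, if_pos hQle]
    have hR : (retr a).toOrderHom i = 0 := by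
      simp only [retr, SimplexCategory.Hom.toOrderHom_mk, OrderHom.coe_mk, if_pos h]
    rw [hL, hR, h0]
  · have hQ := Qmap_apply_right f i (by omega)
    have hQgt : ¬ (((Qmap f).toOrderHom i : Fin (2 * b.len + 1 + 1)) : ℕ) ≤ b.len := by omega
    have hL : ((retr b).toOrderHom ((Qmap f).toOrderHom i) : ℕ) =
        (((Qmap f).toOrderHom i : Fin (2 * b.len + 1 + 1)) : ℕ) - (b.len + 1) := by
      simp only [retr, SimplexCategory.Hom.toOrderHom_mk, OrderHom.coe_mk, if_neg hQgt]
    have hR : ((retr a).toOrderHom i : ℕ) = (i : ℕ) - (a.len + 1) := by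
      simp only [retr, SimplexCategory.Hom.toOrderHom_mk, OrderHom.coe_mk, if_neg h]
    rw [hL, hQ]
    have harg : ((retr a).toOrderHom i) = (⟨(i : ℕ) - (a.len + 1), by
        have := i.is_lt; omega⟩ : Fin (a.len + 1)) := Fin.ext hR
    simp only [harg]
    omega

lemma secInc_comp_retr (a : SimplexCategory) : secInc a ≫ retr a = 𝟙 a := by
  apply SimplexCategory.Hom.ext
  apply OrderHom.ext
  funext i
  apply Fin.ext
  simp only [SimplexCategory.comp_toOrderHom, OrderHom.comp_coe, Function.comp_apply]
  have hval : (((secInc a).toOrderHom i : Fin (2 * a.len + 1 + 1)) : ℕ) = a.len + 1 + (i : ℕ) := rfl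
  have hgt : ¬ (((secInc a).toOrderHom i : Fin (2 * a.len + 1 + 1)) : ℕ) ≤ a.len := by omega
  have hL : ((retr a).toOrderHom ((secInc a).toOrderHom i) : ℕ) =
      (((secInc a).toOrderHom i : Fin (2 * a.len + 1 + 1)) : ℕ) - (a.len + 1) := by
    simp only [retr, SimplexCategory.Hom.toOrderHom_mk, OrderHom.coe_mk, if_neg hgt]
  rw [hL, hval]
  simp [SimplexCategory.Hom.id]


lemma map_comp_apply (Z : SimplexCategoryᵒᵖ ⥤ Type u) {c d e : SimplexCategory}
    (g : c ⟶ d) (h : d ⟶ e) (t : Z.obj (op e)) :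
    Z.map (g ≫ h).op t = Z.map g.op (Z.map h.op t) := by
  rw [op_comp, Z.map_comp]
  rfl

/-- A simplicial map `p : Y ⟶ X` is culf if and only if its edgewise
subdivision `Sd(p) : Sd(Y) ⟶ Sd(X)` is a right fibration.  Since
`Sd = Q*` is precomposition with `Q`, the naturality square of `Sd(p)` over a
map `ℓ` of `Δ` is the naturality square of `p` over `Q(ℓ)`; thus `Sd(p)` is a
right fibration exactly when `p` is cartesian on `Q(ℓ)` for every
last-point-preserving `ℓ`. -/
theorem isCulf_iff_sd_isRightFib (p : Y ⟶ X) :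
    IsCulf p ↔ ∀ {a b : SimplexCategory} (ℓ : a ⟶ b),
      LastPreserving ℓ → IsCartesianOn p (Qmap ℓ) := by
  constructor
  · intro hC a b ℓ hℓ
    exact hC (Qmap ℓ) (active_Qmap ℓ hℓ)
  · intro H a b f hf
    have hP := H f hf.2
    unfold IsCartesianOn at hP ⊢
    rw [types_isPullback_iff] at hP ⊢
    obtain ⟨hcomm', hex⟩ := hP
    refine ⟨fun z => ConcreteCategory.congr_hom (p.naturality f.op) z, ?_⟩
    intro y x hyx
    have hy' : p.app (op (SimplexCategory.mk (2 * a.len + 1))) (Y.map (retr a).op y) =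
        X.map (Qmap f).op (X.map (retr b).op x) := by
      calc p.app (op (SimplexCategory.mk (2 * a.len + 1))) (Y.map (retr a).op y)
          = X.map (retr a).op (p.app (op a) y) := ConcreteCategory.congr_hom (p.naturality (retr a).op) y
        _ = X.map (retr a).op (X.map f.op x) := by rw [hyx]
        _ = X.map (retr a ≫ f).op x := (map_comp_apply X (retr a) f x).symm
        _ = X.map (Qmap f ≫ retr b).op x := by rw [Qmap_comp_retr f hf.1]
        _ = X.map (Qmap f).op (X.map (retr b).op x) := map_comp_apply X (Qmap f) (retr b) x
    obtain ⟨z', ⟨hz1, hz2⟩, huniq⟩ := hex (Y.map (retr a).op y) (X.map (retr b).op x) hy'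
    refine ⟨Y.map (secInc b).op z', ⟨?_, ?_⟩, ?_⟩
    · calc Y.map f.op (Y.map (secInc b).op z')
          = Y.map (f ≫ secInc b).op z' := (map_comp_apply Y f (secInc b) z').symm
        _ = Y.map (secInc a ≫ Qmap f).op z' := by rw [secInc_comp_Qmap]
        _ = Y.map (secInc a).op (Y.map (Qmap f).op z') := map_comp_apply Y (secInc a) (Qmap f) z'
        _ = Y.map (secInc a).op (Y.map (retr a).op y) := by rw [hz1]
        _ = Y.map (secInc a ≫ retr a).op y := (map_comp_apply Y (secInc a) (retr a) y).symm
        _ = y := by rw [secInc_comp_retr]; simp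
    · calc p.app (op b) (Y.map (secInc b).op z')
          = X.map (secInc b).op (p.app (op (SimplexCategory.mk (2 * b.len + 1))) z') :=
            ConcreteCategory.congr_hom (p.naturality (secInc b).op) z'
        _ = X.map (secInc b).op (X.map (retr b).op x) := by rw [hz2]
        _ = X.map (secInc b ≫ retr b).op x := (map_comp_apply X (secInc b) (retr b) x).symm
        _ = x := by rw [secInc_comp_retr]; simp
    · rintro z₂ ⟨h1, h2⟩
      have hw1 : Y.map (Qmap f).op (Y.map (retr b).op z₂) = Y.map (retr a).op y := by
        calc Y.map (Qmap f).op (Y.map (retr b).op z₂)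
            = Y.map (Qmap f ≫ retr b).op z₂ := (map_comp_apply Y (Qmap f) (retr b) z₂).symm
          _ = Y.map (retr a ≫ f).op z₂ := by rw [Qmap_comp_retr f hf.1]
          _ = Y.map (retr a).op (Y.map f.op z₂) := map_comp_apply Y (retr a) f z₂
          _ = Y.map (retr a).op y := by rw [h1]
      have hw2 : p.app (op (SimplexCategory.mk (2 * b.len + 1))) (Y.map (retr b).op z₂) =
          X.map (retr b).op x := by
        calc p.app (op (SimplexCategory.mk (2 * b.len + 1))) (Y.map (retr b).op z₂)
            = X.map (retr b).op (p.app (op b) z₂) := ConcreteCategory.congr_hom (p.naturality (retr b).op) z₂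
          _ = X.map (retr b).op x := by rw [h2]
      have hzz := huniq (Y.map (retr b).op z₂) ⟨hw1, hw2⟩
      calc z₂ = Y.map (𝟙 b).op z₂ := by simp
        _ = Y.map (secInc b ≫ retr b).op z₂ := by rw [secInc_comp_retr]
        _ = Y.map (secInc b).op (Y.map (retr b).op z₂) :=
            map_comp_apply Y (secInc b) (retr b) z₂
        _ = Y.map (secInc b).op z' := by rw [hzz]

end Paper
end
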